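/- The second homotopy move across two components preserves the pairing: if P₁ contains letters A, B with |B| = τ(|A|) forming the pattern ...AB...BA... where the first pair AB lies in component m and the second pair BA in component n (m < n), and P₂ is obtained by deleting A and B, then (w_m, w_n)_{P₁} = (w_m, w_n)_{P₂}; more generally (w_i, w_j)_{P₁} = (w_i, w_j)_{P₂} for all i < j. -/

import Mathlib

/-! Nanophrases over a set `α` (with involution `τ`) in the sense of Turaev,
with letters drawn from a type `L`.  A phrase is encoded as a single list with
`none` acting as the separator `|` between components; thus the homotopy moves
may modify subwords spanning several components. -/

/-- A nanophrase over `α` with letters in `L`: a projection `L → α` and a word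
with separators (`none`) dividing the components. -/
structure NPhrase (α : Type*) (L : Type*) where
  proj : L → α
  word : List (Option L)

namespace NPhrase

/-- The components of a separator-encoded phrase word. -/
def comps {L : Type*} : List (Option L) → List (List L)
  | [] => [[]]
  | none :: l => [] :: comps l
  | some a :: l =>
      match comps l with
      | [] => [[a]]
      | c :: cs => (a :: c) :: cs

/-- Re-encode a list of components as a separator-encoded phrase word. -/
def ofComps {L : Type*} (cs : List (List L)) : List (Option L) :=
  List.intercalate [none] (cs.map (fun c => c.map some))

/-- The letters of a phrase word (separators removed). -/
def letters {L : Type*} (w : List (Option L)) : List L := w.filterMap id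

/-- The Gauss condition: every letter occurs exactly twice or not at all. -/
def IsGauss {α L : Type*} [DecidableEq L] (P : NPhrase α L) : Prop :=
  ∀ x : L, (letters P.word).count x = 0 ∨ (letters P.word).count x = 2

/-- A list consisting only of separators. -/
def Seps {L : Type*} (s : List (Option L)) : Prop := ∀ x ∈ s, x = none

/-- Isomorphism of nanophrases: a bijective relabelling of the letters which
preserves the projections on the letters actually occurring. -/
def Isomorphic {α L : Type*} (P Q : NPhrase α L) : Prop :=
  ∃ e : L ≃ L, (∀ x ∈ letters P.word, Q.proj (e x) = P.proj x) ∧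
    Q.word = P.word.map (Option.map e)

/-- One elementary step of homotopy of nanophrases: an isomorphism or one of the
three homotopy moves (the modified subwords may span several components, i.e.
separators may occur between the displayed consecutive letters). -/
inductive Step {α L : Type*} (τ : α → α) : NPhrase α L → NPhrase α L → Prop
  | iso (g g' : L → α) (w : List (Option L)) (e : L ≃ L)
      (hg : ∀ x ∈ letters w, g' (e x) = g x) :
      Step τ ⟨g, w⟩ ⟨g', w.map (Option.map e)⟩
  | move1 (g : L → α) (A : L) (x s y : List (Option L)) (hs : Seps s) :
      Step τ ⟨g, x ++ [some A] ++ s ++ [some A] ++ y⟩ ⟨g, x ++ s ++ y⟩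
  | move2 (g : L → α) (A B : L) (x s₁ y s₂ z : List (Option L))
      (hs₁ : Seps s₁) (hs₂ : Seps s₂) (hAB : g B = τ (g A)) :
      Step τ ⟨g, x ++ [some A] ++ s₁ ++ [some B] ++ y ++ [some B] ++ s₂ ++ [some A] ++ z⟩
             ⟨g, x ++ s₁ ++ y ++ s₂ ++ z⟩
  | move3 (g : L → α) (A B C : L) (x s₁ y s₂ z s₃ t : List (Option L))
      (hs₁ : Seps s₁) (hs₂ : Seps s₂) (hs₃ : Seps s₃)
      (hAB : g A = g B) (hBC : g B = g C) :
      Step τ ⟨g, x ++ [some A] ++ s₁ ++ [some B] ++ y ++ [some A] ++ s₂ ++ [some C] ++ z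
                  ++ [some B] ++ s₃ ++ [some C] ++ t⟩
             ⟨g, x ++ [some B] ++ s₁ ++ [some A] ++ y ++ [some C] ++ s₂ ++ [some A] ++ z
                  ++ [some C] ++ s₃ ++ [some B] ++ t⟩

/-- Homotopy of nanophrases (with the diagonal homotopy data): the equivalence
relation generated by isomorphisms and the three homotopy moves. -/
def Homotopic {α L : Type*} (τ : α → α) : NPhrase α L → NPhrase α L → Prop :=
  Relation.EqvGen (Step τ)

/-- Relations for the group `Π = ⟨ z_a (a ∈ α) ∣ z_a z_{τ(a)} = 1 ⟩`. -/
def gRels {α : Type*} (τ : α → α) : Set (FreeGroup α) :=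
  {r | ∃ a : α, r = FreeGroup.of a * FreeGroup.of (τ a)}

/-- Relations for the abelian group `π = ⟨ a ∈ α ∣ a·τ(a) = 1, ab = ba ⟩`. -/
def piRels {α : Type*} (τ : α → α) : Set (FreeGroup α) :=
  {r | (∃ a : α, r = FreeGroup.of a * FreeGroup.of (τ a)) ∨
    ∃ a b : α, r = FreeGroup.of a * FreeGroup.of b * (FreeGroup.of a)⁻¹ * (FreeGroup.of b)⁻¹}

/-- The value of `γ` on one component (a word), given the list `pre` of letters
of the phrase read before it: the ordered product of `z_{|X|}` at a first
occurrence and `z_{τ(|X|)}` at a second occurrence. -/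
def gammaWord {α L : Type*} [DecidableEq L] (τ : α → α) (g : L → α) :
    List L → List L → PresentedGroup (gRels τ)
  | _, [] => 1
  | pre, n :: l =>
      (if n ∈ pre then PresentedGroup.of (τ (g n)) else PresentedGroup.of (g n)) *
        gammaWord τ g (pre ++ [n]) l

/-- The `i`-th coordinate (0-indexed) of the invariant `γ` of a nanophrase. -/
def gammaCoord {α L : Type*} [DecidableEq L] (τ : α → α) (P : NPhrase α L) (i : ℕ) :
    PresentedGroup (gRels τ) :=
  gammaWord τ P.proj (((comps P.word).take i).flatten) ((comps P.word).getD i [])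

/-- The pairing `(w_i, w_j)_P ∈ π`: the product of `|X|` over the letters `X`
occurring both in the `i`-th and in the `j`-th component (0-indexed). -/
def pairing {α L : Type*} [DecidableEq L] (τ : α → α) (P : NPhrase α L) (i j : ℕ) :
    PresentedGroup (piRels τ) :=
  ((((comps P.word).getD i []).filter (fun x => x ∈ (comps P.word).getD j [])).map
    (fun x => PresentedGroup.of (P.proj x))).prod

/-- Merge the `l`-th and `(l+1)`-st components of a list of components. -/
def mergeAt {L : Type*} (l : ℕ) (cs : List (List L)) : List (List L) :=
  cs.take l ++ [cs.getD l [] ++ cs.getD (l + 1) []] ++ cs.drop (l + 2)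

/-- The nanophrase `P_a^{1,1;p,q}` of length `k` (0-indexed components): the
letter `0` with `|0| = a` in components `p` and `q`, all other components empty. -/
def stdPair {α : Type*} (k p q : ℕ) (a : α) : NPhrase α ℕ :=
  ⟨fun _ => a, ofComps ((List.range k).map fun i => if i = p ∨ i = q then [0] else [])⟩

/-- The nanoword `w_{a,b} = ABAB` with `|A| = a`, `|B| = b`, viewed as a
nanophrase of length 1. -/
def wab {α : Type*} (a b : α) : NPhrase α ℕ :=
  ⟨fun n => if n = 0 then a else b, [some 0, some 1, some 0, some 1]⟩

/-- The desingularization of an étale word `w`: each letter `A` of multiplicity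
`m` is replaced, at its `i`-th occurrence (1-indexed), by
`A_{1,i} A_{2,i} ⋯ A_{i-1,i} A_{i,i+1} ⋯ A_{i,m}`, where `A_{i,j}` is encoded
as `(A, i, j)`; letters of multiplicity 1 disappear. -/
def desing {L : Type*} [DecidableEq L] (w : List L) : List (L × ℕ × ℕ) :=
  (w.zipIdx.map Prod.swap).flatMap fun pA =>
    let A := pA.2
    let i := (w.take (pA.1 + 1)).count A
    let m := w.count A
    ((List.range (i - 1)).map fun t => (A, t + 1, i)) ++
      ((List.range (m - i)).map fun t => (A, i, i + 1 + t))

/-- Two étale words over `α` are homotopic if their desingularizations are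
homotopic nanowords (nanophrases of length 1). -/
def EtaleHomotopic {α L : Type*} [DecidableEq L] (τ : α → α)
    (g₁ : L → α) (w₁ : List L) (g₂ : L → α) (w₂ : List L) : Prop :=
  Homotopic τ (⟨fun t => g₁ t.1, (desing w₁).map some⟩ : NPhrase α (L × ℕ × ℕ))
    ⟨fun t => g₂ t.1, (desing w₂).map some⟩

end NPhrase

/-! Since `P₁` is Gauss, `A` and `B` occur only at the displayed positions. Hence the components
of `P₂` are those of `P₁` with `A` and `B` filtered out, and so are the letters common to two
components. These lose nothing unless both components contain `A` or `B`, i.e. they are the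
components `m` and `n`; there `A B` appear as adjacent factors of the product, and
`|A| · |B| = |A| · τ|A| = 1` in `π`. -/

namespace List

variable {β : Type*}

theorem getD_append_singleton_append_of_eq (l r : List β) (c d : β) {k : ℕ}
    (hk : k = l.length) : (l ++ [c] ++ r).getD k d = c := by
  simp [hk, getD_eq_getElem?_getD]

theorem getD_append_singleton_append_of_ne (l r : List β) (c c' d : β) {k : ℕ}
    (hk : k ≠ l.length) : (l ++ [c] ++ r).getD k d = (l ++ [c'] ++ r).getD k d := by
  rcases Nat.lt_or_gt_of_ne hk with hk | hk
  · rw [append_assoc, append_assoc, getD_append _ _ _ _ hk, getD_append _ _ _ _ hk]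
  · rw [getD_append_right _ _ _ _ (by simp; omega), getD_append_right _ _ _ _ (by simp; omega)]
    simp

theorem getD_map_of_apply_eq {γ : Type*} (l : List β) (f : β → γ) {d : β} {d' : γ}
    (hd : f d = d') (k : ℕ) : (l.map f).getD k d' = f (l.getD k d) :=
  hd ▸ getD_map l d f

theorem mem_flatten_of_mem_getD {L : List (List β)} {k : ℕ} {x : β} (hx : x ∈ L.getD k []) :
    x ∈ L.flatten := by
  rw [getD_eq_getElem?_getD] at hx
  cases h : L[k]? with
  | none => simp [h] at hx
  | some c => exact mem_flatten_of_mem (mem_of_getElem? h) (by simpa [h] using hx)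

theorem mem_flatten_of_mem_getD_of_ne {cs₁ cs₂ cs₃ : List (List β)} {c d : List β} {k : ℕ}
    (hm : k ≠ cs₁.length) (hn : k ≠ cs₁.length + 1 + cs₂.length) {x : β}
    (hx : x ∈ (cs₁ ++ [c] ++ cs₂ ++ [d] ++ cs₃).getD k []) :
    x ∈ cs₁.flatten ++ cs₂.flatten ++ cs₃.flatten := by
  rw [getD_append_singleton_append_of_ne _ _ _ [] _ (by simp; omega),
    append_assoc (_ ++ _ ++ cs₂), append_assoc (_ ++ _),
    getD_append_singleton_append_of_ne _ _ _ [] _ hm] at hx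
  simpa using mem_flatten_of_mem_getD hx

theorem not_mem_of_count_le_two [DecidableEq β] {x y z : List β} {a b : β}
    (ha : (x ++ [a, b] ++ y ++ [b, a] ++ z).count a ≤ 2)
    (hb : (x ++ [a, b] ++ y ++ [b, a] ++ z).count b ≤ 2) :
    a ∉ x ++ y ++ z ∧ b ∉ x ++ y ++ z := by
  have hne : a ≠ b := by
    rintro rfl
    simp [count_append] at ha
    omega
  simp only [← count_eq_zero]
  simp [count_append, hne, hne.symm] at ha hb ⊢
  omega

theorem map_filter_eq_self (p : β → Bool) {cs : List (List β)} (h : ∀ x ∈ cs.flatten, p x) :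
    cs.map (filter p) = cs := by
  conv_rhs => rw [← map_id cs]
  exact map_congr_left fun c hc =>
    filter_eq_self.2 fun x hx => h x (mem_flatten_of_mem hc hx)

theorem map_filter_erase_pairs (p : β → Bool) {cs₁ cs₂ cs₃ : List (List β)}
    {u u' v v' : List β} {a b : β} (ha : p a = false) (hb : p b = false)
    (hp : ∀ x ∈ (cs₁ ++ [u ++ u'] ++ cs₂ ++ [v ++ v'] ++ cs₃).flatten, p x) :
    (cs₁ ++ [u ++ [a, b] ++ u'] ++ cs₂ ++ [v ++ [b, a] ++ v'] ++ cs₃).map (filter p)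
      = cs₁ ++ [u ++ u'] ++ cs₂ ++ [v ++ v'] ++ cs₃ := by
  have hdrop : ∀ s t : List β, (s ++ [a, b] ++ t).filter p = (s ++ t).filter p ∧
      (s ++ [b, a] ++ t).filter p = (s ++ t).filter p := by
    simp [filter_append, ha, hb]
  calc _ = (cs₁ ++ [u ++ u'] ++ cs₂ ++ [v ++ v'] ++ cs₃).map (filter p) := by
        simp only [map_append, map_cons, map_nil, hdrop]
    _ = _ := map_filter_eq_self p hp

theorem filter_filter_mem_filter [DecidableEq β] (p : β → Bool) (c d : List β) :
    (c.filter p).filter (· ∈ d.filter p) = (c.filter (· ∈ d)).filter p := by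
  simp only [filter_filter, mem_filter]
  congr 1
  funext x
  cases p x <;> simp

theorem prod_map_filter_of_mul_eq_one {G : Type*} [Monoid G] (f : β → G) (p : β → Bool)
    {l₁ l₂ : List β} {a b : β} (h₁ : ∀ x ∈ l₁, p x) (h₂ : ∀ x ∈ l₂, p x)
    (ha : p a = false) (hb : p b = false) (hab : f a * f b = 1) :
    (((l₁ ++ [a, b] ++ l₂).filter p).map f).prod = ((l₁ ++ [a, b] ++ l₂).map f).prod := by
  simp [filter_append, filter_eq_self.2 h₁, filter_eq_self.2 h₂, ha, hb, ← mul_assoc, hab]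

end List

namespace NPhrase

variable {α L : Type*}

theorem comps_ne_nil (w : List (Option L)) : comps w ≠ [] := by
  induction w with
  | nil => simp [comps]
  | cons a l ih =>
    cases a with
    | none => simp [comps]
    | some a =>
      obtain ⟨c, cs, h⟩ := List.exists_cons_of_ne_nil ih
      simp [comps, h]

theorem letters_eq_flatten_comps (w : List (Option L)) : letters w = (comps w).flatten := by
  induction w with
  | nil => simp [comps, letters]
  | cons a l ih =>
    cases a with
    | none => simpa [comps, letters] using ih
    | some a =>
      obtain ⟨c, cs, h⟩ := List.exists_cons_of_ne_nil (comps_ne_nil l)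
      simp only [letters, comps, h, List.filterMap_cons] at ih ⊢
      simpa using ih

theorem IsGauss.not_mem [DecidableEq L] {P : NPhrase α L} (hP : P.IsGauss)
    {x y z : List L} {a b : L} (h : letters P.word = x ++ [a, b] ++ y ++ [b, a] ++ z) :
    a ∉ x ++ y ++ z ∧ b ∉ x ++ y ++ z := by
  have hle : ∀ c, (letters P.word).count c ≤ 2 := fun c => by rcases hP c with h | h <;> omega
  exact List.not_mem_of_count_le_two (h ▸ hle a) (h ▸ hle b)

def commonLetters [DecidableEq L] (P : NPhrase α L) (i j : ℕ) : List L :=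
  ((comps P.word).getD i []).filter (· ∈ (comps P.word).getD j [])

theorem pairing_eq_prod_commonLetters [DecidableEq L] (τ : α → α) (P : NPhrase α L) (i j : ℕ) :
    pairing τ P i j = ((commonLetters P i j).map fun x => PresentedGroup.of (P.proj x)).prod :=
  rfl

theorem commonLetters_of_comps_eq_map_filter [DecidableEq L] {P Q : NPhrase α L} {p : L → Bool}
    (h : comps Q.word = (comps P.word).map (·.filter p)) (i j : ℕ) :
    commonLetters Q i j = (commonLetters P i j).filter p := by
  simp only [commonLetters, h, List.getD_map_of_apply_eq _ _ (List.filter_nil (p := p)),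
    List.filter_filter_mem_filter]

section SplitComps

variable [DecidableEq L] {P : NPhrase α L} {cs₁ cs₂ cs₃ : List (List L)}

theorem commonLetters_eq_of_comps_eq {u u' v v' : List L} {a b : L}
    (h : comps P.word = cs₁ ++ [u ++ [a, b] ++ u'] ++ cs₂ ++ [v ++ [b, a] ++ v'] ++ cs₃) :
    commonLetters P cs₁.length (cs₁.length + 1 + cs₂.length)
      = u.filter (· ∈ v ++ [b, a] ++ v') ++ [a, b] ++ u'.filter (· ∈ v ++ [b, a] ++ v') := by
  rw [commonLetters, h, List.getD_append_singleton_append_of_eq _ _ _ _ (by simp; omega),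
    List.append_assoc (_ ++ _ ++ cs₂), List.append_assoc (_ ++ _),
    List.getD_append_singleton_append_of_eq _ _ _ _ rfl]
  simp [List.filter_append]

theorem mem_flatten_of_mem_commonLetters {c d : List L}
    (h : comps P.word = cs₁ ++ [c] ++ cs₂ ++ [d] ++ cs₃) {i j : ℕ} (hij : i < j)
    (hmn : ¬(i = cs₁.length ∧ j = cs₁.length + 1 + cs₂.length)) {x : L}
    (hx : x ∈ commonLetters P i j) : x ∈ cs₁.flatten ++ cs₂.flatten ++ cs₃.flatten := by
  obtain ⟨hxi, hxj⟩ := List.mem_filter.1 hx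
  rw [h] at hxi hxj
  by_cases hi : i ≠ cs₁.length ∧ i ≠ cs₁.length + 1 + cs₂.length
  · exact List.mem_flatten_of_mem_getD_of_ne hi.1 hi.2 hxi
  · have hjm : j ≠ cs₁.length := by omega
    have hjn : j ≠ cs₁.length + 1 + cs₂.length := by omega
    exact List.mem_flatten_of_mem_getD_of_ne hjm hjn (of_decide_eq_true hxj)

end SplitComps

theorem of_mul_of_tau (τ : α → α) (a : α) :
    (PresentedGroup.of a : PresentedGroup (piRels τ)) * PresentedGroup.of (τ a) = 1 :=
  PresentedGroup.one_of_mem (Or.inl ⟨a, rfl⟩)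

end NPhrase

open NPhrase in
theorem pairing_move2_general {α : Type*} (τ : α → α)
    (P₁ P₂ : NPhrase α ℕ)
    (hG₁ : P₁.IsGauss) (A B : ℕ) (cs₁ cs₂ cs₃ : List (List ℕ))
    (u u' v v' : List ℕ) (hproj : P₁.proj = P₂.proj)
    (hAB : P₁.proj B = τ (P₁.proj A))
    (h₁ : comps P₁.word = cs₁ ++ [u ++ [A, B] ++ u'] ++ cs₂ ++ [v ++ [B, A] ++ v'] ++ cs₃)
    (h₂ : comps P₂.word = cs₁ ++ [u ++ u'] ++ cs₂ ++ [v ++ v'] ++ cs₃) :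
    (pairing τ P₁ cs₁.length (cs₁.length + 1 + cs₂.length)
        = pairing τ P₂ cs₁.length (cs₁.length + 1 + cs₂.length)) ∧
      ∀ i j, i < j → pairing τ P₁ i j = pairing τ P₂ i j := by
  obtain ⟨hA, hB⟩ := hG₁.not_mem (a := A) (b := B) (x := cs₁.flatten ++ u)
    (y := u' ++ cs₂.flatten ++ v) (z := v' ++ cs₃.flatten) (by simp [letters_eq_flatten_comps, h₁])
  let p : ℕ → Bool := fun x => x ≠ A ∧ x ≠ B
  have hp : ∀ x ∈ (comps P₂.word).flatten, p x := fun x hx => by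
    have hx' : x ∈ cs₁.flatten ++ u ++ (u' ++ cs₂.flatten ++ v) ++ (v' ++ cs₃.flatten) := by
      simp only [h₂, List.flatten_append, List.flatten_cons, List.flatten_nil, List.mem_append,
        List.append_nil] at hx ⊢
      tauto
    simpa [p] using ⟨ne_of_mem_of_not_mem hx' hA, ne_of_mem_of_not_mem hx' hB⟩
  have hcomps : comps P₂.word = (comps P₁.word).map (·.filter p) := by
    rw [h₁, List.map_filter_erase_pairs p (by simp [p]) (by simp [p]) (h₂ ▸ hp), h₂]
  have key : ∀ i j, i < j → pairing τ P₁ i j = pairing τ P₂ i j := by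
    intro i j hij
    rw [pairing_eq_prod_commonLetters, pairing_eq_prod_commonLetters, ← hproj,
      commonLetters_of_comps_eq_map_filter hcomps]
    by_cases hmn : i = cs₁.length ∧ j = cs₁.length + 1 + cs₂.length
    · obtain ⟨rfl, rfl⟩ := hmn
      rw [commonLetters_eq_of_comps_eq h₁]
      refine (List.prod_map_filter_of_mul_eq_one _ _ ?_ ?_ (by simp [p]) (by simp [p])
        (by rw [hAB]; exact of_mul_of_tau τ _)).symm
      all_goals exact fun x hx => hp x (by simp [h₂, List.mem_of_mem_filter hx])
    · refine congrArg _ (congrArg _ (List.filter_eq_self.2 fun x hx => ?_)).symm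
      have hx' := mem_flatten_of_mem_commonLetters h₁ hij hmn hx
      exact hp x (by simp [h₂] at hx' ⊢; aesop)
  exact ⟨key _ _ (by omega), key⟩

open NPhrase in
/-- the second homotopy move across two components, deleting
letters `A, B` with `|B| = τ(|A|)` forming `AB` in component `m` and `BA` in
component `n` (`m < n`), preserves the pairing `(w_i, w_j)` for all `i < j`
(in particular for `(i, j) = (m, n)`). -/
theorem pairing_move2 {α : Type*} [Fintype α] (τ : α → α)
    (hτ : Function.Involutive τ) (P₁ P₂ : NPhrase α ℕ)
    (hG₁ : P₁.IsGauss) (A B : ℕ) (cs₁ cs₂ cs₃ : List (List ℕ))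
    (u u' v v' : List ℕ) (hproj : P₁.proj = P₂.proj)
    (hAB : P₁.proj B = τ (P₁.proj A))
    (h₁ : comps P₁.word = cs₁ ++ [u ++ [A, B] ++ u'] ++ cs₂ ++ [v ++ [B, A] ++ v'] ++ cs₃)
    (h₂ : comps P₂.word = cs₁ ++ [u ++ u'] ++ cs₂ ++ [v ++ v'] ++ cs₃) :
    (pairing τ P₁ cs₁.length (cs₁.length + 1 + cs₂.length)
        = pairing τ P₂ cs₁.length (cs₁.length + 1 + cs₂.length)) ∧
      ∀ i j, i < j → pairing τ P₁ i j = pairing τ P₂ i j :=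
  pairing_move2_general τ P₁ P₂ hG₁ A B cs₁ cs₂ cs₃ u u' v v' hproj hAB h₁ h₂
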